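/- arXiv:1904.04251 — 2 statements merged into one kernel-verified Lean document; each statement's English description precedes it below -/
import Mathlib

section
/- Let M ∈ ℝ^{m×n} with rank(M) = r, and let W_k = v_k u_kᵀ (k = 1,…,r) be the rank-one matrices produced by the Wedderburn rank-reducing process applied to M, with intermediate matrices M₁ = M and M_{k+1} = M_k − W_k. Then for all j > k, v_k does not lie in the column space of M_j and u_k does not lie in the column space of M_jᵀ. -/
/-!
Each step of the process annihilates its pivot vectors: `y_kᵀ M_{k+1} = 0` and `M_{k+1} x_k = 0`,
and a step never shrinks the left or right kernel, so `y_kᵀ M_j = 0` and `M_j x_k = 0` for all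
`j > k`. On the other hand `(y_kᵀ v_k)(u_kᵀ x_k) = y_kᵀ W_k x_k = w_k ≠ 0`, so `y_k` pairs
nontrivially with `v_k`, which therefore cannot be `M_j z`; dually for `u_k`.
-/

open Matrix

namespace Matrix

variable {K m n : Type*} [Field K] [Fintype m] [Fintype n]

def wedderburnStep (A : Matrix m n K) (x : n → K) (y : m → K) : Matrix m n K :=
  A - (y ⬝ᵥ A *ᵥ x)⁻¹ • vecMulVec (A *ᵥ x) (y ᵥ* A)

variable {A : Matrix m n K} {x : n → K} {y : m → K}

theorem vecMul_wedderburnStep_self (hw : y ⬝ᵥ A *ᵥ x ≠ 0) :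
    y ᵥ* wedderburnStep A x y = 0 := by
  rw [wedderburnStep, vecMul_sub, vecMul_smul, vecMul_vecMulVec, smul_smul, inv_mul_cancel₀ hw,
    one_smul, sub_self]

theorem wedderburnStep_mulVec_self (hw : y ⬝ᵥ A *ᵥ x ≠ 0) :
    wedderburnStep A x y *ᵥ x = 0 := by
  rw [wedderburnStep, sub_mulVec, smul_mulVec, vecMulVec_mulVec, op_smul_eq_smul,
    ← dotProduct_mulVec, smul_smul, inv_mul_cancel₀ hw, one_smul, sub_self]

theorem vecMul_wedderburnStep_of_vecMul_eq_zero {z : m → K} (hz : z ᵥ* A = 0) :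
    z ᵥ* wedderburnStep A x y = 0 := by
  rw [wedderburnStep, vecMul_sub, vecMul_smul, vecMul_vecMulVec, dotProduct_mulVec z, hz,
    zero_dotProduct, zero_smul, smul_zero, sub_zero]

theorem wedderburnStep_mulVec_of_mulVec_eq_zero {z : n → K} (hz : A *ᵥ z = 0) :
    wedderburnStep A x y *ᵥ z = 0 := by
  rw [wedderburnStep, sub_mulVec, smul_mulVec, vecMulVec_mulVec, ← dotProduct_mulVec, hz,
    dotProduct_zero, MulOpposite.op_zero, zero_smul, smul_zero, sub_zero]

theorem wedderburnStep.vecMul_eq_zero_and_mulVec_eq_zero_of_lt {r : ℕ}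
    (Ms : Fin (r + 1) → Matrix m n K) (x : Fin r → n → K) (y : Fin r → m → K)
    (hw : ∀ k, y k ⬝ᵥ Ms k.castSucc *ᵥ x k ≠ 0)
    (hstep : ∀ k, Ms k.succ = wedderburnStep (Ms k.castSucc) (x k) (y k))
    {k : Fin r} {j : Fin (r + 1)} (hkj : (k : ℕ) < j) :
    y k ᵥ* Ms j = 0 ∧ Ms j *ᵥ x k = 0 := by
  induction j using Fin.induction with
  | zero => exact absurd hkj (Nat.not_lt_zero _)
  | succ i ih =>
    rw [hstep]
    rcases Nat.lt_succ_iff_lt_or_eq.mp hkj with hlt | heq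
    · obtain ⟨hy, hx⟩ := ih hlt
      exact ⟨vecMul_wedderburnStep_of_vecMul_eq_zero hy, wedderburnStep_mulVec_of_mulVec_eq_zero hx⟩
    · obtain rfl : k = i := Fin.ext heq
      exact ⟨vecMul_wedderburnStep_self (hw k), wedderburnStep_mulVec_self (hw k)⟩

theorem dotProduct_mul_dotProduct_eq_of_vecMulVec_eq {v : m → K} {u : n → K}
    (hW : vecMulVec v u = (y ⬝ᵥ A *ᵥ x)⁻¹ • vecMulVec (A *ᵥ x) (y ᵥ* A))
    (hw : y ⬝ᵥ A *ᵥ x ≠ 0) :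
    (y ⬝ᵥ v) * (u ⬝ᵥ x) = y ⬝ᵥ A *ᵥ x := by
  have key := congrArg (fun B => y ᵥ* B ⬝ᵥ x) hW
  simp only [vecMul_smul, vecMul_vecMulVec, smul_dotProduct, smul_eq_mul] at key
  rw [key, ← dotProduct_mulVec, inv_mul_cancel_left₀ hw]

theorem notMem_range_mulVec_of_vecMul_eq_zero {v : m → K} (hA : y ᵥ* A = 0)
    (hv : y ⬝ᵥ v ≠ 0) : v ∉ Set.range A.mulVec := by
  rintro ⟨z, rfl⟩
  exact hv (by rw [dotProduct_mulVec, hA, zero_dotProduct])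

theorem notMem_range_vecMul_of_mulVec_eq_zero {u : n → K} (hA : A *ᵥ x = 0)
    (hu : u ⬝ᵥ x ≠ 0) : u ∉ Set.range A.vecMul := by
  rintro ⟨z, rfl⟩
  exact hu (by rw [← dotProduct_mulVec, hA, dotProduct_zero])

end Matrix

theorem stmt16_general {m n : ℕ} (r : ℕ)
    (Ms : Fin (r + 1) → Matrix (Fin m) (Fin n) ℝ)
    (x : Fin r → Fin n → ℝ) (y : Fin r → Fin m → ℝ)
    (v : Fin r → Fin m → ℝ) (u : Fin r → Fin n → ℝ)
    (hw : ∀ k : Fin r, y k ⬝ᵥ (Ms k.castSucc).mulVec (x k) ≠ 0)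
    (hW : ∀ k : Fin r,
      Matrix.vecMulVec (v k) (u k) =
        (y k ⬝ᵥ (Ms k.castSucc).mulVec (x k))⁻¹ •
          Matrix.vecMulVec ((Ms k.castSucc).mulVec (x k)) ((Ms k.castSucc).vecMul (y k)))
    (hrec : ∀ k : Fin r,
      Ms k.succ = Ms k.castSucc - Matrix.vecMulVec (v k) (u k)) :
    ∀ (k : Fin r) (j : Fin (r + 1)), (k : ℕ) < (j : ℕ) →
      v k ∉ Set.range (Ms j).mulVec ∧ u k ∉ Set.range (Ms j).vecMul := by
  have hstep : ∀ k, Ms k.succ = wedderburnStep (Ms k.castSucc) (x k) (y k) := fun k => by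
    rw [hrec, hW, wedderburnStep]
  intro k j hkj
  obtain ⟨hy, hx⟩ := wedderburnStep.vecMul_eq_zero_and_mulVec_eq_zero_of_lt Ms x y hw hstep hkj
  obtain ⟨hyv, hux⟩ :=
    mul_ne_zero_iff.mp (dotProduct_mul_dotProduct_eq_of_vecMulVec_eq (hW k) (hw k) ▸ hw k)
  exact ⟨notMem_range_mulVec_of_vecMul_eq_zero hy hyv, notMem_range_vecMul_of_mulVec_eq_zero hx hux⟩

theorem stmt16 {m n : ℕ} (M : Matrix (Fin m) (Fin n) ℝ) (r : ℕ)
    (hr : M.rank = r)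
    (Ms : Fin (r + 1) → Matrix (Fin m) (Fin n) ℝ)
    (x : Fin r → Fin n → ℝ) (y : Fin r → Fin m → ℝ)
    (v : Fin r → Fin m → ℝ) (u : Fin r → Fin n → ℝ)
    (hM0 : Ms 0 = M)
    (hw : ∀ k : Fin r, y k ⬝ᵥ (Ms k.castSucc).mulVec (x k) ≠ 0)
    (hW : ∀ k : Fin r,
      Matrix.vecMulVec (v k) (u k) =
        (y k ⬝ᵥ (Ms k.castSucc).mulVec (x k))⁻¹ •
          Matrix.vecMulVec ((Ms k.castSucc).mulVec (x k)) ((Ms k.castSucc).vecMul (y k)))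
    (hrec : ∀ k : Fin r,
      Ms k.succ = Ms k.castSucc - Matrix.vecMulVec (v k) (u k)) :
    ∀ (k : Fin r) (j : Fin (r + 1)), (k : ℕ) < (j : ℕ) →
      v k ∉ Set.range (Ms j).mulVec ∧ u k ∉ Set.range (Ms j).vecMul :=
  stmt16_general r Ms x y v u hw hW hrec
end

section
/- Let C ∈ ℝ^{m×n} be of the form C = 𝟙ₘuᵀ + v𝟙ₙᵀ + Σᵢ rᵢcᵢᵀ where the matrix M = 𝟙ₘuᵀ + v𝟙ₙᵀ has rank 1. Then either 𝟙ₘ lies in the column space of C, or 𝟙ₙ lies in the column space of Cᵀ (or both). (Assume, as in the rank factorization, that the nonzero factors of M together with the rᵢ form linearly independent column vectors and likewise for the row factors.) -/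
/-!
Since `𝟙uᵀ + v𝟙ᵀ = abᵀ`, the entries satisfy `u j + v i = a i * b j`, so every mixed second
difference `(a i - a i₀) * (b j - b j₀)` vanishes: either `a` or `b` is constant, and it is
nonzero because `abᵀ` has rank one. Linear independence of `b, c₁, …, c_k` gives an `x` with
`b ⬝ x = t` and `cᵢ ⬝ x = 0`, hence `C x = t a`; for a constant `a` this is `𝟙` after scaling.
Dually for constant `b`, using the independence of `a, r₁, …, r_k`.
-/

open Matrix

section

variable {ι α K : Type*} [Fintype α] [Finite ι] [Field K]

theorem exists_dotProduct_eq_of_linearIndependent {f : ι → α → K} (hf : LinearIndependent K f)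
    (t : ι → K) : ∃ x : α → K, ∀ i, f i ⬝ᵥ x = t i := by
  have hsurj : LinearMap.range (Matrix.of f).mulVecLin = ⊤ := by
    rw [Matrix.range_mulVecLin]
    exact span_flip_eq_top_iff_linearIndependent.2 hf
  obtain ⟨x, hx⟩ := LinearMap.range_eq_top.1 hsurj t
  exact ⟨x, fun i => congrFun hx i⟩

end

section

variable {m n K : Type*} [Field K] {k : ℕ}

theorem forall_eq_or_forall_eq_of_vecMulVec_one_add_eq_vecMulVec {u : n → K} {v : m → K}
    {a : m → K} {b : n → K} (h : vecMulVec 1 u + vecMulVec v 1 = vecMulVec a b)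
    (i₀ : m) (j₀ : n) : (∀ i, a i = a i₀) ∨ ∀ j, b j = b j₀ := by
  have hentry : ∀ i j, u j + v i = a i * b j := fun i j => by
    simpa [vecMulVec_apply] using congrFun (congrFun h i) j
  have hmixed : ∀ i j, (a i - a i₀) * (b j - b j₀) = 0 := fun i j => by
    linear_combination -hentry i j + hentry i₀ j + hentry i j₀ - hentry i₀ j₀
  by_contra! hne
  obtain ⟨⟨i, hi⟩, j, hj⟩ := hne
  exact mul_ne_zero (sub_ne_zero.2 hi) (sub_ne_zero.2 hj) (hmixed i j)

theorem exists_mulVec_vecMulVec_add_sum_eq_smul [Fintype n] (a : m → K) (b : n → K) (r : Fin k → m → K)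
    (c : Fin k → n → K) (hbc : LinearIndependent K (Fin.cons b c)) (t : K) :
    ∃ x, (vecMulVec a b + ∑ i, vecMulVec (r i) (c i)) *ᵥ x = t • a := by
  obtain ⟨x, hx⟩ := exists_dotProduct_eq_of_linearIndependent hbc (Fin.cons t 0)
  refine ⟨x, ?_⟩
  have hb : b ⬝ᵥ x = t := by simpa using hx 0
  have hc : ∀ i, c i ⬝ᵥ x = 0 := fun i => by simpa using hx i.succ
  simp [add_mulVec, sum_mulVec, vecMulVec_mulVec, hb, hc]

theorem exists_vecMul_vecMulVec_add_sum_eq_smul [Fintype m] (a : m → K) (b : n → K) (r : Fin k → m → K)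
    (c : Fin k → n → K) (har : LinearIndependent K (Fin.cons a r)) (t : K) :
    ∃ y, y ᵥ* (vecMulVec a b + ∑ i, vecMulVec (r i) (c i)) = t • b := by
  obtain ⟨y, hy⟩ := exists_dotProduct_eq_of_linearIndependent har (Fin.cons t 0)
  refine ⟨y, ?_⟩
  have ha : y ⬝ᵥ a = t := by simpa [dotProduct_comm] using hy 0
  have hr : ∀ i, y ⬝ᵥ r i = 0 := fun i => by simpa [dotProduct_comm] using hy i.succ
  simp [vecMul_add, vecMul_sum, vecMul_vecMulVec, ha, hr]

end

theorem stmt17 {m n k : ℕ}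
    (u : Fin n → ℝ) (v : Fin m → ℝ) (a : Fin m → ℝ) (b : Fin n → ℝ)
    (r : Fin k → Fin m → ℝ) (c : Fin k → Fin n → ℝ)
    (C : Matrix (Fin m) (Fin n) ℝ)
    (hM : Matrix.vecMulVec (1 : Fin m → ℝ) u + Matrix.vecMulVec v (1 : Fin n → ℝ)
      = Matrix.vecMulVec a b)
    (hMrank : (Matrix.vecMulVec a b).rank = 1)
    (hC : C = Matrix.vecMulVec a b + ∑ i : Fin k, Matrix.vecMulVec (r i) (c i))
    (hcols : LinearIndependent ℝ (Fin.cons a r))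
    (hrows : LinearIndependent ℝ (Fin.cons b c)) :
    (∃ x : Fin n → ℝ, C.mulVec x = 1) ∨ (∃ y : Fin m → ℝ, C.vecMul y = 1) := by
  obtain ⟨i₀, j₀, h₀⟩ : ∃ i j, a i * b j ≠ 0 := by
    by_contra! h
    have hzero : vecMulVec a b = 0 := ext fun i j => by simpa [vecMulVec_apply] using h i j
    simp [hzero] at hMrank
  subst hC
  rcases forall_eq_or_forall_eq_of_vecMulVec_one_add_eq_vecMulVec hM i₀ j₀ with ha | hb
  · obtain ⟨x, hx⟩ := exists_mulVec_vecMulVec_add_sum_eq_smul a b r c hrows (a i₀)⁻¹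
    refine .inl ⟨x, hx.trans (funext fun i => ?_)⟩
    simp [ha i, left_ne_zero_of_mul h₀]
  · obtain ⟨y, hy⟩ := exists_vecMul_vecMulVec_add_sum_eq_smul a b r c hcols (b j₀)⁻¹
    refine .inr ⟨y, hy.trans (funext fun j => ?_)⟩
    simp [hb j, right_ne_zero_of_mul h₀]
end
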